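/- Let φ: A → A' be a bijective unital multiplicative *-Lie-Jordan n-map between unital C*-algebras, P₁ a nontrivial projection with P₂ = I - P₁, and Q_i = φ(P_i). Then φ(P_i A P_j) = Q_i A' Q_j for all i, j ∈ {1,2}. -/
import Mathlib
set_option linter.unusedSectionVars false

def lieStar {R : Type*} [NonUnitalRing R] [StarRing R] (x y : R) : R := x * y - y * star x
def jordanStar {R : Type*} [NonUnitalRing R] [StarRing R] (x y : R) : R := x * y + y * star x
def pStar {R : Type*} [NonUnitalRing R] [StarRing R] (x : R) (l : List R) : R := l.foldl lieStar x
def qStar {R : Type*} [NonUnitalRing R] [StarRing R] (x : R) (l : List R) : R := l.foldl jordanStar x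

section basic
variable {R : Type*} [Ring R] [StarRing R]

lemma star_lieStar (x y : R) (hy : star y = y) : star (lieStar x y) = - lieStar x y := by
  simp only [lieStar, star_sub, star_mul, star_star, hy]
  abel

lemma star_jordanStar (x y : R) (hy : star y = y) : star (jordanStar x y) = jordanStar x y := by
  simp only [jordanStar, star_add, star_mul, star_star, hy]
  abel

lemma foldl_lie_rep (k : ℕ) {z : R} (hz : star z = -z) :
    List.foldl lieStar z (List.replicate k (1:R)) = (2^k : ℕ) • z := by
  induction k generalizing z with
  | zero => simp
  | succ k ih =>
    rw [List.replicate_succ, List.foldl_cons]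
    have h1 : lieStar z 1 = (2:ℕ) • z := by
      simp only [lieStar, mul_one, one_mul, star_one, hz, two_smul]; abel
    rw [h1, ih (by rw [star_nsmul, hz, smul_neg]), smul_smul]
    congr 1

lemma foldl_jordan_rep (k : ℕ) {z : R} (hz : star z = z) :
    List.foldl jordanStar z (List.replicate k (1:R)) = (2^k : ℕ) • z := by
  induction k generalizing z with
  | zero => simp
  | succ k ih =>
    rw [List.replicate_succ, List.foldl_cons]
    have h1 : jordanStar z 1 = (2:ℕ) • z := by
      simp only [jordanStar, mul_one, one_mul, star_one, hz, two_smul]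
    rw [h1, ih (by rw [star_nsmul, hz]), smul_smul]
    congr 1

lemma pStar_cons (x y : R) (l : List R) : pStar x (y :: l) = pStar (lieStar x y) l := rfl
lemma qStar_cons (x y : R) (l : List R) : qStar x (y :: l) = qStar (jordanStar x y) l := rfl

lemma pStar_chain1 (a y : R) (k : ℕ) (hy : star y = y) :
    pStar a (y :: List.replicate k 1) = (2^k : ℕ) • lieStar a y := by
  rw [pStar_cons, pStar, foldl_lie_rep k (star_lieStar a y hy)]

lemma qStar_chain1 (a y : R) (k : ℕ) (hy : star y = y) :
    qStar a (y :: List.replicate k 1) = (2^k : ℕ) • jordanStar a y := by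
  rw [qStar_cons, qStar, foldl_jordan_rep k (star_jordanStar a y hy)]

lemma pStar_chain2 (a y₁ y₂ : R) (k : ℕ) (hy₂ : star y₂ = y₂) :
    pStar a (y₁ :: y₂ :: List.replicate k 1) = (2^k : ℕ) • lieStar (lieStar a y₁) y₂ := by
  rw [pStar_cons, pStar_chain1 _ _ _ hy₂]

lemma qStar_chain2 (a y₁ y₂ : R) (k : ℕ) (hy₂ : star y₂ = y₂) :
    qStar a (y₁ :: y₂ :: List.replicate k 1) = (2^k : ℕ) • jordanStar (jordanStar a y₁) y₂ := by
  rw [qStar_cons, qStar_chain1 _ _ _ hy₂]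

lemma lieStar_zero_left (y : R) : lieStar 0 y = 0 := by simp [lieStar]
lemma lieStar_zero_right (x : R) : lieStar x 0 = 0 := by simp [lieStar]

lemma pStar_zero (l : List R) : pStar 0 l = 0 := by
  induction l with
  | nil => rfl
  | cons y l ih => rw [pStar_cons, lieStar_zero_left]; exact ih

end basic

lemma pow2_smul_cancel {M : Type*} [AddCommGroup M] [Module ℂ M] (k : ℕ) {x y : M}
    (h : (2^k : ℕ) • x = (2^k : ℕ) • y) : x = y := by
  have h2 : ((2^k : ℕ) : ℂ) • x = ((2^k : ℕ) : ℂ) • y := by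
    rw [Nat.cast_smul_eq_nsmul, Nat.cast_smul_eq_nsmul]; exact h
  have hne : ((2^k : ℕ) : ℂ) ≠ 0 := by exact_mod_cast pow_ne_zero k two_ne_zero
  exact smul_right_injective _ hne h2

lemma double_cancel {M : Type*} [AddCommGroup M] [Module ℂ M] {x y : M}
    (h : x + x = y + y) : x = y := by
  refine pow2_smul_cancel 1 ?_
  simpa [two_smul] using h

section transfer
variable {A B : Type*} [Ring A] [StarRing A] [Module ℂ A]
  [Ring B] [StarRing B] [Module ℂ B]
variable {n : ℕ} {φ : A → B}

lemma phi_zero (hn : 2 ≤ n) (hsurj : Function.Surjective φ)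
    (hp : ∀ (x : A) (l : List A), l.length = n - 1 → φ (pStar x l) = pStar (φ x) (l.map φ)) :
    φ 0 = 0 := by
  obtain ⟨z, hz⟩ := hsurj 0
  have hl : (List.replicate (n-1) z).length = n - 1 := by simp
  have h := hp 0 _ hl
  rw [pStar_zero] at h
  rw [List.map_replicate, hz] at h
  obtain ⟨m, hm⟩ : ∃ m, n - 1 = m + 1 := ⟨n - 2, by omega⟩
  rw [hm, List.replicate_succ, pStar_cons, lieStar_zero_right, pStar_zero] at h
  exact h

lemma transferL1 (hn : 2 ≤ n) (hφ1 : φ 1 = 1)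
    (hp : ∀ (x : A) (l : List A), l.length = n - 1 → φ (pStar x l) = pStar (φ x) (l.map φ))
    (a y : A) (hy : star y = y) (hy' : star (φ y) = φ y) :
    φ ((2^(n-2) : ℕ) • lieStar a y) = (2^(n-2) : ℕ) • lieStar (φ a) (φ y) := by
  have hl : (y :: List.replicate (n-2) (1:A)).length = n - 1 := by simp; omega
  have h := hp a _ hl
  rw [pStar_chain1 _ _ _ hy] at h
  rw [List.map_cons, List.map_replicate, hφ1, pStar_chain1 _ _ _ hy'] at h
  exact h

lemma transferJ1 (hn : 2 ≤ n) (hφ1 : φ 1 = 1)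
    (hq : ∀ (x : A) (l : List A), l.length = n - 1 → φ (qStar x l) = qStar (φ x) (l.map φ))
    (a y : A) (hy : star y = y) (hy' : star (φ y) = φ y) :
    φ ((2^(n-2) : ℕ) • jordanStar a y) = (2^(n-2) : ℕ) • jordanStar (φ a) (φ y) := by
  have hl : (y :: List.replicate (n-2) (1:A)).length = n - 1 := by simp; omega
  have h := hq a _ hl
  rw [qStar_chain1 _ _ _ hy] at h
  rw [List.map_cons, List.map_replicate, hφ1, qStar_chain1 _ _ _ hy'] at h
  exact h

lemma transferL2 (hn : 2 ≤ n) (hφ1 : φ 1 = 1)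
    (hp : ∀ (x : A) (l : List A), l.length = n - 1 → φ (pStar x l) = pStar (φ x) (l.map φ))
    (a y₁ y₂ : A) (hy₂ : star y₂ = y₂) (hy₂' : star (φ y₂) = φ y₂) :
    φ ((2^(n-3) : ℕ) • lieStar (lieStar a y₁) y₂)
      = (2^(n-3) : ℕ) • lieStar (lieStar (φ a) (φ y₁)) (φ y₂) := by
  rcases eq_or_lt_of_le hn with h2 | h3
  · have hk : n - 3 = 0 := by omega
    rw [hk, pow_zero, one_smul, one_smul]
    have e1 := hp a [y₁] (by simp; omega)
    have e2 := hp (lieStar a y₁) [y₂] (by simp; omega)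
    simp only [pStar, List.foldl_cons, List.foldl_nil, List.map_cons, List.map_nil] at e1 e2
    rw [e2, e1]
  · have hl : (y₁ :: y₂ :: List.replicate (n-3) (1:A)).length = n - 1 := by simp; omega
    have h := hp a _ hl
    rw [pStar_chain2 _ _ _ _ hy₂] at h
    rw [List.map_cons, List.map_cons, List.map_replicate, hφ1, pStar_chain2 _ _ _ _ hy₂'] at h
    exact h

lemma transferJ2 (hn : 2 ≤ n) (hφ1 : φ 1 = 1)
    (hq : ∀ (x : A) (l : List A), l.length = n - 1 → φ (qStar x l) = qStar (φ x) (l.map φ))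
    (a y₁ y₂ : A) (hy₂ : star y₂ = y₂) (hy₂' : star (φ y₂) = φ y₂) :
    φ ((2^(n-3) : ℕ) • jordanStar (jordanStar a y₁) y₂)
      = (2^(n-3) : ℕ) • jordanStar (jordanStar (φ a) (φ y₁)) (φ y₂) := by
  rcases eq_or_lt_of_le hn with h2 | h3
  · have hk : n - 3 = 0 := by omega
    rw [hk, pow_zero, one_smul, one_smul]
    have e1 := hq a [y₁] (by simp; omega)
    have e2 := hq (jordanStar a y₁) [y₂] (by simp; omega)
    simp only [qStar, List.foldl_cons, List.foldl_nil, List.map_cons, List.map_nil] at e1 e2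
    rw [e2, e1]
  · have hl : (y₁ :: y₂ :: List.replicate (n-3) (1:A)).length = n - 1 := by simp; omega
    have h := hq a _ hl
    rw [qStar_chain2 _ _ _ _ hy₂] at h
    rw [List.map_cons, List.map_cons, List.map_replicate, hφ1, qStar_chain2 _ _ _ _ hy₂'] at h
    exact h

end transfer

section derived
variable {A B : Type*} [Ring A] [StarRing A] [Module ℂ A]
  [Ring B] [StarRing B] [Module ℂ B]
variable {n : ℕ} {φ : A → B}

lemma sa_pres (hn : 2 ≤ n) (hφ1 : φ 1 = 1) (hsurj : Function.Surjective φ)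
    (hp : ∀ (x : A) (l : List A), l.length = n - 1 → φ (pStar x l) = pStar (φ x) (l.map φ))
    (a : A) (ha : star a = a) : star (φ a) = φ a := by
  have h0 := phi_zero hn hsurj hp
  have h := transferL1 hn hφ1 hp a 1 (star_one A) (by rw [hφ1]; exact star_one B)
  have hz : lieStar a (1:A) = 0 := by simp [lieStar, ha]
  rw [hz, smul_zero, h0, hφ1] at h
  have h2 : lieStar (φ a) (1:B) = 0 :=
    pow2_smul_cancel (n-2) (by rw [← h, smul_zero])
  simp only [lieStar, mul_one, one_mul] at h2
  exact (sub_eq_zero.mp h2).symm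

lemma rightAnn (hn : 2 ≤ n) (hφ1 : φ 1 = 1) (hbij : Function.Bijective φ)
    (hp : ∀ (x : A) (l : List A), l.length = n - 1 → φ (pStar x l) = pStar (φ x) (l.map φ))
    (hq : ∀ (x : A) (l : List A), l.length = n - 1 → φ (qStar x l) = qStar (φ x) (l.map φ))
    (a y : A) (hy : star y = y) (hy' : star (φ y) = φ y) :
    a * y = 0 ↔ φ a * φ y = 0 := by
  have h0 := phi_zero hn hbij.2 hp
  constructor
  · intro h
    have h' : y * star a = 0 := by
      have := congrArg star h
      rwa [star_mul, hy, star_zero] at this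
    have hz : lieStar a y = 0 := by rw [lieStar, h, h', sub_zero]
    have hw : jordanStar a y = 0 := by rw [jordanStar, h, h', add_zero]
    have e1 := transferL1 hn hφ1 hp a y hy hy'
    have e2 := transferJ1 hn hφ1 hq a y hy hy'
    rw [hz, smul_zero, h0] at e1
    rw [hw, smul_zero, h0] at e2
    have f1 : lieStar (φ a) (φ y) = 0 := pow2_smul_cancel (n-2) (by rw [← e1, smul_zero])
    have f2 : jordanStar (φ a) (φ y) = 0 := pow2_smul_cancel (n-2) (by rw [← e2, smul_zero])
    rw [lieStar] at f1; rw [jordanStar] at f2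
    refine double_cancel (y := (0:B)) ?_
    calc φ a * φ y + φ a * φ y
        = (φ a * φ y - φ y * star (φ a)) + (φ a * φ y + φ y * star (φ a)) := by abel
      _ = 0 + 0 := by rw [f1, f2]
  · intro h
    have h' : φ y * star (φ a) = 0 := by
      have := congrArg star h
      rwa [star_mul, hy', star_zero] at this
    have hz : lieStar (φ a) (φ y) = 0 := by rw [lieStar, h, h', sub_zero]
    have hw : jordanStar (φ a) (φ y) = 0 := by rw [jordanStar, h, h', add_zero]
    have e1 := transferL1 hn hφ1 hp a y hy hy'
    have e2 := transferJ1 hn hφ1 hq a y hy hy'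
    rw [hz, smul_zero, ← h0] at e1
    rw [hw, smul_zero, ← h0] at e2
    have f1 : lieStar a y = 0 := pow2_smul_cancel (n-2) (by rw [hbij.1 e1, smul_zero])
    have f2 : jordanStar a y = 0 := pow2_smul_cancel (n-2) (by rw [hbij.1 e2, smul_zero])
    rw [lieStar] at f1; rw [jordanStar] at f2
    refine double_cancel (y := (0:A)) ?_
    calc a * y + a * y
        = (a * y - y * star a) + (a * y + y * star a) := by abel
      _ = 0 + 0 := by rw [f1, f2]

lemma cross_lie_expand {R : Type*} [Ring R] [StarRing R] (a y₁ y₂ : R)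
    (hy₁ : star y₁ = y₁) (h12 : y₁ * y₂ = 0) (h21 : y₂ * y₁ = 0) :
    lieStar (lieStar a y₁) y₂ = y₂ * a * y₁ - y₁ * star a * y₂ := by
  have : lieStar (lieStar a y₁) y₂ = (lieStar a y₁) * y₂ + y₂ * (lieStar a y₁) := by
    rw [show lieStar (lieStar a y₁) y₂ = (lieStar a y₁) * y₂ - y₂ * star (lieStar a y₁) from rfl,
        star_lieStar _ _ hy₁, mul_neg, sub_neg_eq_add]
  rw [this]
  have expand : (lieStar a y₁) * y₂ + y₂ * (lieStar a y₁)
      = a * (y₁ * y₂) - y₁ * star a * y₂ + y₂ * a * y₁ - (y₂ * y₁) * star a := by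
    simp only [lieStar]
    noncomm_ring
  rw [expand, h12, h21, mul_zero, zero_mul]
  abel

lemma cross_jordan_expand {R : Type*} [Ring R] [StarRing R] (a y₁ y₂ : R)
    (hy₁ : star y₁ = y₁) (h12 : y₁ * y₂ = 0) (h21 : y₂ * y₁ = 0) :
    jordanStar (jordanStar a y₁) y₂ = y₂ * a * y₁ + y₁ * star a * y₂ := by
  have : jordanStar (jordanStar a y₁) y₂ = (jordanStar a y₁) * y₂ + y₂ * (jordanStar a y₁) := by
    rw [show jordanStar (jordanStar a y₁) y₂
          = (jordanStar a y₁) * y₂ + y₂ * star (jordanStar a y₁) from rfl,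
        star_jordanStar _ _ hy₁]
  rw [this]
  have expand : (jordanStar a y₁) * y₂ + y₂ * (jordanStar a y₁)
      = a * (y₁ * y₂) + y₁ * star a * y₂ + y₂ * a * y₁ + (y₂ * y₁) * star a := by
    simp only [jordanStar]
    noncomm_ring
  rw [expand, h12, h21, mul_zero, zero_mul]
  abel

lemma crossAnn (hn : 2 ≤ n) (hφ1 : φ 1 = 1) (hbij : Function.Bijective φ)
    (hp : ∀ (x : A) (l : List A), l.length = n - 1 → φ (pStar x l) = pStar (φ x) (l.map φ))
    (hq : ∀ (x : A) (l : List A), l.length = n - 1 → φ (qStar x l) = qStar (φ x) (l.map φ))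
    (a y₁ y₂ : A) (hy₁ : star y₁ = y₁) (hy₂ : star y₂ = y₂)
    (hy₁' : star (φ y₁) = φ y₁) (hy₂' : star (φ y₂) = φ y₂)
    (h12 : y₁ * y₂ = 0) (h21 : y₂ * y₁ = 0)
    (h12' : φ y₁ * φ y₂ = 0) (h21' : φ y₂ * φ y₁ = 0) :
    y₂ * a * y₁ = 0 ↔ φ y₂ * φ a * φ y₁ = 0 := by
  have h0 := phi_zero hn hbij.2 hp
  have eL := transferL2 hn hφ1 hp a y₁ y₂ hy₂ hy₂'
  have eJ := transferJ2 hn hφ1 hq a y₁ y₂ hy₂ hy₂'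
  rw [cross_lie_expand a y₁ y₂ hy₁ h12 h21,
      cross_lie_expand (φ a) (φ y₁) (φ y₂) hy₁' h12' h21'] at eL
  rw [cross_jordan_expand a y₁ y₂ hy₁ h12 h21,
      cross_jordan_expand (φ a) (φ y₁) (φ y₂) hy₁' h12' h21'] at eJ
  constructor
  · intro h
    have h' : y₁ * star a * y₂ = 0 := by
      have := congrArg star h
      rwa [star_mul, star_mul, hy₁, hy₂, star_zero, ← mul_assoc] at this
    rw [h, h', sub_zero, smul_zero, h0] at eL
    rw [h, h', zero_add, smul_zero, h0] at eJ
    have f1 : φ y₂ * φ a * φ y₁ - φ y₁ * star (φ a) * φ y₂ = 0 :=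
      pow2_smul_cancel (n-3) (by rw [← eL, smul_zero])
    have f2 : φ y₂ * φ a * φ y₁ + φ y₁ * star (φ a) * φ y₂ = 0 :=
      pow2_smul_cancel (n-3) (by rw [← eJ, smul_zero])
    refine double_cancel (y := (0:B)) ?_
    calc φ y₂ * φ a * φ y₁ + φ y₂ * φ a * φ y₁
        = (φ y₂ * φ a * φ y₁ - φ y₁ * star (φ a) * φ y₂)
          + (φ y₂ * φ a * φ y₁ + φ y₁ * star (φ a) * φ y₂) := by abel
      _ = 0 + 0 := by rw [f1, f2]
  · intro h
    have h' : φ y₁ * star (φ a) * φ y₂ = 0 := by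
      have := congrArg star h
      rwa [star_mul, star_mul, hy₁', hy₂', star_zero, ← mul_assoc] at this
    rw [h, h', sub_zero, smul_zero, ← h0] at eL
    rw [h, h', zero_add, smul_zero, ← h0] at eJ
    have f1 : y₂ * a * y₁ - y₁ * star a * y₂ = 0 :=
      pow2_smul_cancel (n-3) (by rw [hbij.1 eL, smul_zero])
    have f2 : y₂ * a * y₁ + y₁ * star a * y₂ = 0 :=
      pow2_smul_cancel (n-3) (by rw [hbij.1 eJ, smul_zero])
    refine double_cancel (y := (0:A)) ?_
    calc y₂ * a * y₁ + y₂ * a * y₁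
        = (y₂ * a * y₁ - y₁ * star a * y₂) + (y₂ * a * y₁ + y₁ * star a * y₂) := by abel
      _ = 0 + 0 := by rw [f1, f2]

end derived

section ringlemmas
variable {R : Type*} [Ring R] [StarRing R]

lemma diag_ring (e a : R) (hee : e * e = e) :
    e * a * e = a ↔ (a * (1 - e) = 0 ∧ (1 - e) * a * e = 0) := by
  have h0 : (1 - e) * e = 0 := by rw [sub_mul, one_mul, hee, sub_self]
  have h0' : e * (1 - e) = 0 := by rw [mul_sub, mul_one, hee, sub_self]
  constructor
  · intro h
    constructor
    · conv_lhs => rw [← h]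
      calc e * a * e * (1 - e) = (e * a) * (e * (1 - e)) := by noncomm_ring
        _ = 0 := by rw [h0', mul_zero]
    · conv_lhs => rw [← h]
      calc (1 - e) * (e * a * e) * e = ((1 - e) * e) * (a * (e * e)) := by noncomm_ring
        _ = 0 := by rw [h0, zero_mul]
  · rintro ⟨h1, h2⟩
    have h1' : a - a * e = 0 := by rw [← h1]; noncomm_ring
    have hae : a * e = a := (sub_eq_zero.mp h1').symm
    have h2' : a - e * a = 0 := by
      have he2 : (1 - e) * a * e = a - e * a := by
        calc (1 - e) * a * e = a * e - e * (a * e) := by noncomm_ring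
          _ = a - e * a := by rw [hae]
      rw [← he2]; exact h2
    have hea : e * a = a := (sub_eq_zero.mp h2').symm
    rw [hea, hae]

lemma offdiag_ring (hcan : ∀ x y : R, x + x = y + y → x = y) (e a : R)
    (he : star e = e) (hee : e * e = e) :
    e * a * (1 - e) = a ↔
      (a * e = 0
        ∧ lieStar (lieStar a (1 - e)) e = lieStar (lieStar a (1 - e)) (1 - e)
        ∧ jordanStar (jordanStar a (1 - e)) e = jordanStar (jordanStar a (1 - e)) (1 - e)) := by
  have h0 : (1 - e) * e = 0 := by rw [sub_mul, one_mul, hee, sub_self]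
  have hstar1e : star (1 - e) = 1 - e := by rw [star_sub, star_one, he]
  constructor
  · intro h
    have hae : a * e = 0 := by
      conv_lhs => rw [← h]
      calc e * a * (1 - e) * e = (e * a) * ((1 - e) * e) := by noncomm_ring
        _ = 0 := by rw [h0, mul_zero]
    have hea : e * a = a := by
      conv_lhs => rw [← h]
      calc e * (e * a * (1 - e)) = (e * e) * a * (1 - e) := by noncomm_ring
        _ = a := by rw [hee, h]
    have hsae : star a * e = star a := by
      conv_rhs => rw [← hea, star_mul, he]
    have hesa : e * star a = 0 := by
      have := congrArg star hae
      rwa [star_mul, he, star_zero] at this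
    refine ⟨hae, ?_, ?_⟩
    · have hz1 : lieStar a (1 - e) = a - star a := by
        simp only [lieStar, hstar1e, mul_sub, sub_mul, mul_one, one_mul]
        rw [hae, hesa]
        abel
      rw [hz1]
      have hXp : lieStar (a - star a) e = a - star a := by
        simp only [lieStar, star_sub, star_star, mul_sub, sub_mul]
        rw [hae, hesa, hsae, hea]
        abel
      have hYp : lieStar (a - star a) (1 - e) = a - star a := by
        simp only [lieStar, hstar1e, star_sub, star_star, mul_sub, sub_mul, mul_one, one_mul]
        rw [hae, hesa, hsae, hea]
        abel
      rw [hXp, hYp]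
    · have hw1 : jordanStar a (1 - e) = a + star a := by
        simp only [jordanStar, hstar1e, mul_sub, sub_mul, mul_one, one_mul]
        rw [hae, hesa]
        abel
      rw [hw1]
      have hXq : jordanStar (a + star a) e = a + star a := by
        simp only [jordanStar, star_add, star_star, add_mul, mul_add]
        rw [hae, hesa, hsae, hea]
        abel
      have hYq : jordanStar (a + star a) (1 - e) = a + star a := by
        simp only [jordanStar, hstar1e, star_add, star_star, add_mul, mul_add, mul_sub, sub_mul,
          mul_one, one_mul]
        rw [hae, hesa, hsae, hea]
        abel
      rw [hXq, hYq]
  · rintro ⟨hae, hLp, hLq⟩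
    have hesa : e * star a = 0 := by
      have := congrArg star hae
      rwa [star_mul, he, star_zero] at this
    have hz1 : lieStar a (1 - e) = a - star a := by
      simp only [lieStar, hstar1e, mul_sub, sub_mul, mul_one, one_mul]
      rw [hae, hesa]
      abel
    have hw1 : jordanStar a (1 - e) = a + star a := by
      simp only [jordanStar, hstar1e, mul_sub, sub_mul, mul_one, one_mul]
      rw [hae, hesa]
      abel
    rw [hz1] at hLp
    rw [hw1] at hLq
    have hXp : lieStar (a - star a) e = e * a - star a * e := by
      simp only [lieStar, star_sub, star_star, mul_sub, sub_mul]
      rw [hae, hesa]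
      abel
    have hYp : lieStar (a - star a) (1 - e) = (a - star a) + (a - star a) - (e * a - star a * e) := by
      simp only [lieStar, hstar1e, star_sub, star_star, mul_sub, sub_mul, mul_one, one_mul]
      rw [hae, hesa]
      abel
    have hXq : jordanStar (a + star a) e = e * a + star a * e := by
      simp only [jordanStar, star_add, star_star, add_mul, mul_add]
      rw [hae, hesa]
      abel
    have hYq : jordanStar (a + star a) (1 - e) = (a + star a) + (a + star a) - (e * a + star a * e) := by
      simp only [jordanStar, hstar1e, star_add, star_star, add_mul, mul_add, mul_sub, sub_mul,
        mul_one, one_mul]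
      rw [hae, hesa]
      abel
    rw [hXp, hYp] at hLp
    rw [hXq, hYq] at hLq
    have hp2 : e * a - star a * e = a - star a := by
      refine hcan _ _ ?_
      nth_rewrite 2 [hLp]
      abel
    have hq2 : e * a + star a * e = a + star a := by
      refine hcan _ _ ?_
      nth_rewrite 2 [hLq]
      abel
    have hea : e * a = a := by
      refine hcan _ _ ?_
      calc e * a + e * a = (e * a - star a * e) + (e * a + star a * e) := by abel
        _ = (a - star a) + (a + star a) := by rw [hp2, hq2]
        _ = a + a := by abel
    calc e * a * (1 - e) = (e * a) - (e * a) * e := by noncomm_ring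
      _ = a - a * e := by rw [hea]
      _ = a := by rw [hae, sub_zero]

end ringlemmas

section main
variable {A B : Type*} [Ring A] [StarRing A] [Module ℂ A]
  [Ring B] [StarRing B] [Module ℂ B]

lemma peirce_pointwise {n : ℕ} {φ : A → B} (hn : 2 ≤ n) (hbij : Function.Bijective φ)
    (hφ1 : φ 1 = 1)
    (hp : ∀ (x : A) (l : List A), l.length = n - 1 → φ (pStar x l) = pStar (φ x) (l.map φ))
    (hq : ∀ (x : A) (l : List A), l.length = n - 1 → φ (qStar x l) = qStar (φ x) (l.map φ))
    (P : A) (hPidem : P * P = P) (hPsa : star P = P)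
    (Pi Pj : A) (hi : Pi = P ∨ Pi = 1 - P) (hj : Pj = P ∨ Pj = 1 - P) :
    (φ Pi * φ Pi = φ Pi) ∧ (φ Pj * φ Pj = φ Pj)
      ∧ ∀ a, Pi * a * Pj = a ↔ φ Pi * φ a * φ Pj = φ a := by
  have h0 := phi_zero hn hbij.2 hp
  have hcanA : ∀ x y : A, x + x = y + y → x = y := fun x y h => double_cancel h
  have hcanB : ∀ x y : B, x + x = y + y → x = y := fun x y h => double_cancel h
  have hP'sa : star (1 - P) = 1 - P := by rw [star_sub, star_one, hPsa]
  have hP'idem : (1 - P) * (1 - P) = 1 - P := by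
    rw [mul_sub, mul_one, sub_mul, one_mul, hPidem]; abel
  have hPP' : P * (1 - P) = 0 := by rw [mul_sub, mul_one, hPidem, sub_self]
  have hP'P : (1 - P) * P = 0 := by rw [sub_mul, one_mul, hPidem, sub_self]
  have hQsa : star (φ P) = φ P := sa_pres hn hφ1 hbij.2 hp P hPsa
  have hQ'sa : star (φ (1 - P)) = φ (1 - P) := sa_pres hn hφ1 hbij.2 hp (1 - P) hP'sa
  -- idempotency of φ P
  have hQidem : φ P * φ P = φ P := by
    have e1 := transferJ1 hn hφ1 hq 1 P hPsa hQsa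
    have e2 := transferJ1 hn hφ1 hq P P hPsa hQsa
    rw [show jordanStar (1:A) P = P + P by simp [jordanStar]] at e1
    rw [show jordanStar P P = P + P by rw [jordanStar, hPsa, hPidem], e1, hφ1] at e2
    have := pow2_smul_cancel (n-2) e2
    rw [show jordanStar (1:B) (φ P) = φ P + φ P by simp [jordanStar],
        show jordanStar (φ P) (φ P) = φ P * φ P + φ P * φ P by rw [jordanStar, hQsa]] at this
    exact (hcanB _ _ this).symm
  have hQ'idem : φ (1 - P) * φ (1 - P) = φ (1 - P) := by
    have e1 := transferJ1 hn hφ1 hq 1 (1 - P) hP'sa hQ'sa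
    have e2 := transferJ1 hn hφ1 hq (1 - P) (1 - P) hP'sa hQ'sa
    rw [show jordanStar (1:A) (1 - P) = (1 - P) + (1 - P) by simp [jordanStar, hP'sa]] at e1
    rw [show jordanStar (1 - P) (1 - P) = (1 - P) + (1 - P) by
          rw [jordanStar, hP'sa, hP'idem], e1, hφ1] at e2
    have := pow2_smul_cancel (n-2) e2
    rw [show jordanStar (1:B) (φ (1 - P)) = φ (1 - P) + φ (1 - P) by simp [jordanStar, hQ'sa],
        show jordanStar (φ (1 - P)) (φ (1 - P)) = φ (1 - P) * φ (1 - P) + φ (1 - P) * φ (1 - P) by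
          rw [jordanStar, hQ'sa]] at this
    exact (hcanB _ _ this).symm
  -- orthogonality of φ P and φ (1-P)
  have horthB : φ P * φ (1 - P) = 0 ∧ φ (1 - P) * φ P = 0 := by
    have e1 := transferL1 hn hφ1 hp P (1 - P) hP'sa hQ'sa
    have e2 := transferJ1 hn hφ1 hq P (1 - P) hP'sa hQ'sa
    rw [show lieStar P (1 - P) = 0 by rw [lieStar, hPsa, hPP', hP'P, sub_zero],
        smul_zero, h0] at e1
    rw [show jordanStar P (1 - P) = 0 by rw [jordanStar, hPsa, hPP', hP'P, add_zero],
        smul_zero, h0] at e2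
    have f1 : lieStar (φ P) (φ (1 - P)) = 0 := pow2_smul_cancel (n-2) (by rw [← e1, smul_zero])
    have f2 : jordanStar (φ P) (φ (1 - P)) = 0 := pow2_smul_cancel (n-2) (by rw [← e2, smul_zero])
    rw [lieStar, hQsa] at f1; rw [jordanStar, hQsa] at f2
    have hx : φ P * φ (1 - P) = 0 := by
      refine hcanB _ 0 ?_
      calc φ P * φ (1 - P) + φ P * φ (1 - P)
          = (φ P * φ (1 - P) - φ (1 - P) * φ P) + (φ P * φ (1 - P) + φ (1 - P) * φ P) := by abel
        _ = 0 + 0 := by rw [f1, f2]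
    refine ⟨hx, ?_⟩
    have := f2
    rw [hx, zero_add] at this
    exact this
  -- φ (1-P) = 1 - φ P
  have hcomplP : φ (1 - P) = 1 - φ P := by
    set b := 1 - φ P - φ (1 - P) with hb
    obtain ⟨a, ha⟩ := hbij.2 b
    have hbQ : b * φ P = 0 := by
      rw [hb]
      calc (1 - φ P - φ (1 - P)) * φ P = φ P - φ P * φ P - φ (1 - P) * φ P := by noncomm_ring
        _ = 0 := by rw [hQidem, horthB.2, sub_zero, sub_self]
    have hbQ' : b * φ (1 - P) = 0 := by
      rw [hb]
      calc (1 - φ P - φ (1 - P)) * φ (1 - P)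
          = φ (1 - P) - φ P * φ (1 - P) - φ (1 - P) * φ (1 - P) := by noncomm_ring
        _ = 0 := by rw [hQ'idem, horthB.1, sub_zero, sub_self]
    have haP : a * P = 0 := (rightAnn hn hφ1 hbij hp hq a P hPsa hQsa).2 (by rw [ha]; exact hbQ)
    have haP' : a * (1 - P) = 0 :=
      (rightAnn hn hφ1 hbij hp hq a (1 - P) hP'sa hQ'sa).2 (by rw [ha]; exact hbQ')
    have haz : a = 0 := by
      have : a * P + a * (1 - P) = a := by rw [← mul_add]; simp
      rw [haP, haP', add_zero] at this
      exact this.symm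
    have : b = 0 := by rw [← ha, haz, h0]
    rw [hb] at this
    exact (sub_eq_zero.mp this).symm
  -- generic diagonal equivalence
  have diag_iff : ∀ e : A, star e = e → e * e = e → star (φ e) = φ e → φ e * φ e = φ e →
      φ (1 - e) = 1 - φ e →
      ∀ a, e * a * e = a ↔ φ e * φ a * φ e = φ a := by
    intro e he hee hfe hfee hcompl a
    have hse' : star (1 - e) = 1 - e := by rw [star_sub, star_one, he]
    have hfse' : star (φ (1 - e)) = φ (1 - e) := by rw [hcompl, star_sub, star_one, hfe]
    have hee' : e * (1 - e) = 0 := by rw [mul_sub, mul_one, hee, sub_self]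
    have he'e : (1 - e) * e = 0 := by rw [sub_mul, one_mul, hee, sub_self]
    have hfee' : φ e * φ (1 - e) = 0 := by rw [hcompl, mul_sub, mul_one, hfee, sub_self]
    have hfe'e : φ (1 - e) * φ e = 0 := by rw [hcompl, sub_mul, one_mul, hfee, sub_self]
    rw [diag_ring e a hee, diag_ring (φ e) (φ a) hfee]
    have c1 := rightAnn hn hφ1 hbij hp hq a (1 - e) hse' hfse'
    rw [hcompl] at c1
    have c2 := crossAnn hn hφ1 hbij hp hq a e (1 - e) he hse' hfe hfse' hee' he'e hfee' hfe'e
    rw [hcompl] at c2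
    rw [c1, c2]
  -- generic off-diagonal equivalence
  have offdiag_iff : ∀ e : A, star e = e → e * e = e → star (φ e) = φ e → φ e * φ e = φ e →
      φ (1 - e) = 1 - φ e →
      ∀ a, e * a * (1 - e) = a ↔ φ e * φ a * (1 - φ e) = φ a := by
    intro e he hee hfe hfee hcompl a
    have hse' : star (1 - e) = 1 - e := by rw [star_sub, star_one, he]
    have hfse' : star (φ (1 - e)) = φ (1 - e) := by rw [hcompl, star_sub, star_one, hfe]
    rw [offdiag_ring hcanA e a he hee, offdiag_ring hcanB (φ e) (φ a) hfe hfee]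
    have c1 := rightAnn hn hφ1 hbij hp hq a e he hfe
    have tL1 := transferL2 hn hφ1 hp a (1 - e) e he hfe
    have tL2 := transferL2 hn hφ1 hp a (1 - e) (1 - e) hse' hfse'
    have tJ1 := transferJ2 hn hφ1 hq a (1 - e) e he hfe
    have tJ2 := transferJ2 hn hφ1 hq a (1 - e) (1 - e) hse' hfse'
    rw [hcompl] at tL1 tL2 tJ1 tJ2
    have c2 : lieStar (lieStar a (1 - e)) e = lieStar (lieStar a (1 - e)) (1 - e)
        ↔ lieStar (lieStar (φ a) (1 - φ e)) (φ e)
          = lieStar (lieStar (φ a) (1 - φ e)) (1 - φ e) := by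
      constructor
      · intro hxy
        refine pow2_smul_cancel (n-3) ?_
        rw [← tL1, ← tL2, hxy]
      · intro hxy
        refine pow2_smul_cancel (n-3) (hbij.1 ?_)
        rw [tL1, tL2, hxy]
    have c3 : jordanStar (jordanStar a (1 - e)) e = jordanStar (jordanStar a (1 - e)) (1 - e)
        ↔ jordanStar (jordanStar (φ a) (1 - φ e)) (φ e)
          = jordanStar (jordanStar (φ a) (1 - φ e)) (1 - φ e) := by
      constructor
      · intro hxy
        refine pow2_smul_cancel (n-3) ?_
        rw [← tJ1, ← tJ2, hxy]
      · intro hxy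
        refine pow2_smul_cancel (n-3) (hbij.1 ?_)
        rw [tJ1, tJ2, hxy]
    rw [c1, c2, c3]
  -- complement fact for 1 - P
  have hcomplP' : φ (1 - (1 - P)) = 1 - φ (1 - P) := by
    rw [sub_sub_cancel, hcomplP, sub_sub_cancel]
  have h1Q' : (1 : B) - φ (1 - P) = φ P := by rw [hcomplP, sub_sub_cancel]
  rcases hi with hi | hi <;> rcases hj with hj | hj <;> rw [hi, hj]
  · exact ⟨hQidem, hQidem, diag_iff P hPsa hPidem hQsa hQidem hcomplP⟩
  · refine ⟨hQidem, hQ'idem, fun a => ?_⟩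
    rw [hcomplP]
    exact offdiag_iff P hPsa hPidem hQsa hQidem hcomplP a
  · refine ⟨hQ'idem, hQidem, fun a => ?_⟩
    have := offdiag_iff (1 - P) hP'sa hP'idem hQ'sa hQ'idem hcomplP' a
    rw [sub_sub_cancel, h1Q'] at this
    exact this
  · exact ⟨hQ'idem, hQ'idem, diag_iff (1 - P) hP'sa hP'idem hQ'sa hQ'idem hcomplP'⟩

end main

/-- φ(P_i A P_j) = Q_i A' Q_j where Q_i = φ(P_i). -/
theorem starLieJordanMap_peirce_image {A B : Type*} [NormedRing A] [StarRing A] [CStarRing A] [NormedAlgebra ℂ A] [CompleteSpace A] [StarModule ℂ A] [NormedRing B] [StarRing B] [CStarRing B] [NormedAlgebra ℂ B] [CompleteSpace B] [StarModule ℂ B]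
    (n : ℕ) (hn : 2 ≤ n) (φ : A → B) (hbij : Function.Bijective φ) (hφ1 : φ 1 = 1)
    (hp : ∀ (x : A) (l : List A), l.length = n - 1 → φ (pStar x l) = pStar (φ x) (l.map φ))
    (hq : ∀ (x : A) (l : List A), l.length = n - 1 → φ (qStar x l) = qStar (φ x) (l.map φ)) (P : A) (hPidem : P * P = P) (hPsa : star P = P) (hP0 : P ≠ 0) (hP1 : P ≠ 1)
    (Pi Pj : A) (hi : Pi = P ∨ Pi = 1 - P) (hj : Pj = P ∨ Pj = 1 - P) :
    (fun x : A => φ (Pi * x * Pj)) '' Set.univ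
      = (fun z : B => φ Pi * z * φ Pj) '' Set.univ := by
  obtain ⟨hQi, hQj, key⟩ :=
    peirce_pointwise hn hbij hφ1 hp hq P hPidem hPsa Pi Pj hi hj
  have hPiidem : Pi * Pi = Pi := by
    rcases hi with h | h <;> rw [h]
    · exact hPidem
    · rw [mul_sub, mul_one, sub_mul, one_mul, hPidem]; abel
  have hPjidem : Pj * Pj = Pj := by
    rcases hj with h | h <;> rw [h]
    · exact hPidem
    · rw [mul_sub, mul_one, sub_mul, one_mul, hPidem]; abel
  ext w
  simp only [Set.image_univ, Set.mem_range]
  constructor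
  · rintro ⟨x, rfl⟩
    refine ⟨φ (Pi * x * Pj), ?_⟩
    have hfix : Pi * (Pi * x * Pj) * Pj = Pi * x * Pj := by
      calc Pi * (Pi * x * Pj) * Pj = (Pi * Pi) * x * (Pj * Pj) := by noncomm_ring
        _ = Pi * x * Pj := by rw [hPiidem, hPjidem]
    exact (key (Pi * x * Pj)).mp hfix
  · rintro ⟨z, rfl⟩
    obtain ⟨a, ha⟩ := hbij.2 (φ Pi * z * φ Pj)
    have hfix : φ Pi * φ a * φ Pj = φ a := by
      rw [ha]
      calc φ Pi * (φ Pi * z * φ Pj) * φ Pj = (φ Pi * φ Pi) * z * (φ Pj * φ Pj) := by noncomm_ring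
        _ = φ Pi * z * φ Pj := by rw [hQi, hQj]
    refine ⟨a, ?_⟩
    rw [(key a).mpr hfix, ha]
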